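/- For each $n \in \mathbb{N}$, let $\mathcal{D}^{(n)}$ be a bounded sequence of integers $(d^{(n)}_k)_{k\ge 1}$ with every $d^{(n)}_k \ge 2$, and let $(i_n, j_n)$ be a pair of real numbers with $0 < i_n, j_n < 1$ and $i_n + j_n = 1$. Then the countable intersection $\bigcap_{n=1}^{\infty} \mathrm{Bad}_{\mathcal{D}^{(n)}}(i_n, j_n)$ is nonempty. -/

import Mathlib

/-- `Dprod d n = d 0 * d 1 * ... * d (n-1)`, i.e. the product of the first `n`
terms of the sequence `d` (so `Dprod d 0 = 1`). -/
def Dprod (d : ℕ → ℕ) (n : ℕ) : ℕ := ∏ k ∈ Finset.range n, d k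

/-- The `𝒟`-adic pseudo absolute value `|q|_𝒟 = inf {1 / D_n : q ∈ D_n ℤ}`. -/
noncomputable def pseudoAbs (d : ℕ → ℕ) (q : ℕ) : ℝ :=
  sInf {x : ℝ | ∃ n : ℕ, Dprod d n ∣ q ∧ x = 1 / (Dprod d n : ℝ)}

/-- Distance from a real number to its nearest integer. -/
noncomputable def distNearestInt (x : ℝ) : ℝ := |x - round x|

/-- The set of mixed `(i,j)`-badly approximable numbers `Bad_𝒟(i,j)`. -/
def BadD (d : ℕ → ℕ) (i j : ℝ) : Set ℝ :=
  {x : ℝ | ∃ c : ℝ, 0 < c ∧ ∀ q : ℕ, 0 < q →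
    max (pseudoAbs d q ^ (1 / i)) (distNearestInt ((q : ℝ) * x) ^ (1 / j)) > c / (q : ℝ)}

/-! Put `c n = 64⁻¹ ^ (n + 2)`. If `|q|_𝒟^{1/i} ≤ c / q` then `x` lies in the `n`-th Bad set as
soon as `|x - p / q| > ρ(q) = (c / q) ^ j / q` for every `p`, so these discs are obstacles to avoid.
A common divisor `D_N` of two such denominators `q ≤ q'` gives
`|p / q - p' / q'| ≥ D_N / (q q') ≥ ρ(q') / c`: at each scale the obstacles of one family are
sparse.

A Cantor set is built from `64`-adic cells: each surviving cell of level `s` is cut into `64`, and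
a child is discarded when it meets an obstacle of radius in `(64⁻¹ ^ (s + 2), 64⁻¹ ^ (s + 1)]`.
By sparsity, family `n` discards at most `16` children per surviving cell of level `s - n`, so the
numbers `V s` of survivors satisfy `64 V s ≤ V (s + 1) + 16 ∑_{t ≤ s} V t`, whence
`∑_{t ≤ s} V t ≤ 2 V s` by induction. No level is empty, and a point common to all levels avoids
every obstacle. -/

open Finset

lemma card_le_four_of_separated {S : Finset ℝ} {lo δ : ℝ} (hδ : 0 < δ)
    (hmem : ∀ u ∈ S, u ∈ Set.Icc lo (lo + 3 * δ))
    (hsep : ∀ u ∈ S, ∀ v ∈ S, u ≠ v → δ ≤ |u - v|) : #S ≤ 4 := by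
  calc #S ≤ #(Icc (0 : ℤ) 3) := card_le_card_of_injOn (fun u => ⌊(u - lo) / δ⌋) ?_ ?_
    _ = 4 := rfl
  · intro u hu
    obtain ⟨hlo, hhi⟩ := hmem u hu
    have hquot : (u - lo) / δ ≤ 3 := by rw [div_le_iff₀ hδ]; linarith
    simp only [coe_Icc, Set.mem_Icc, Int.floor_nonneg]
    exact ⟨div_nonneg (by linarith) hδ.le, Int.floor_le_floor hquot |>.trans (by norm_num)⟩
  · intro u hu v hv huv
    by_contra hne
    have hclose := Int.abs_sub_lt_one_of_floor_eq_floor huv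
    rw [← sub_div, sub_sub_sub_cancel_right, abs_div, abs_of_pos hδ, div_lt_one hδ] at hclose
    exact (hsep u hu v hv hne).not_gt hclose

lemma card_le_four_of_mul_mem_Icc {S : Finset ℕ} {lo L : ℝ} (hL : 0 < L)
    (hmem : ∀ a ∈ S, (a : ℝ) * L ∈ Set.Icc lo (lo + 3 * L)) : #S ≤ 4 := by
  have hinj : Set.InjOn (fun a : ℕ => (a : ℝ) * L) S := fun a _ b _ h => by
    simpa [hL.ne'] using h
  rw [← card_image_of_injOn hinj]
  refine card_le_four_of_separated hL (by simpa using hmem) ?_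
  simp only [mem_image]
  rintro _ ⟨a, -, rfl⟩ _ ⟨b, -, rfl⟩ hne
  have hab : a ≠ b := fun h => hne (h ▸ rfl)
  have hone : (1 : ℤ) ≤ |(a : ℤ) - b| := Int.one_le_abs (sub_ne_zero.mpr (by exact_mod_cast hab))
  replace hone : (1 : ℝ) ≤ |(a : ℝ) - b| := by exact_mod_cast hone
  rw [← sub_mul, abs_mul, abs_of_pos hL]
  nlinarith

namespace Avoidance

def children (S : Finset ℕ) : Finset ℕ :=
  (S ×ˢ range 64).image fun p => 64 * p.1 + p.2

lemma mem_children {S : Finset ℕ} {a : ℕ} : a ∈ children S ↔ a / 64 ∈ S := by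
  simp only [children, mem_image, mem_product, mem_range, Prod.exists]
  constructor
  · rintro ⟨m, r, ⟨hm, hr⟩, rfl⟩
    rwa [show (64 * m + r) / 64 = m by omega]
  · exact fun ha => ⟨a / 64, a % 64, ⟨ha, Nat.mod_lt _ (by norm_num)⟩, Nat.div_add_mod a 64⟩

lemma card_children (S : Finset ℕ) : #(children S) = 64 * #S := by
  rw [children, card_image_of_injOn, card_product, card_range, mul_comm]
  rintro ⟨m, r⟩ h ⟨m', r'⟩ h' heq
  simp only [coe_product, coe_range, Set.mem_prod, Set.mem_Iio] at h h' heq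
  ext <;> simp only <;> omega

def cell (s a : ℕ) : Set ℝ := Set.Icc (a * (64⁻¹ : ℝ) ^ s) ((a + 1) * (64⁻¹ : ℝ) ^ s)

lemma cell_succ_subset (s a : ℕ) : cell (s + 1) a ⊆ cell s (a / 64) := by
  rintro x ⟨hleft, hright⟩
  have hL : (0 : ℝ) < 64⁻¹ ^ (s + 1) := by positivity
  have hscale : (64⁻¹ : ℝ) ^ s = 64 * 64⁻¹ ^ (s + 1) := by rw [pow_succ]; ring
  have hlow : ((a / 64 : ℕ) : ℝ) * 64 ≤ a := by exact_mod_cast Nat.div_mul_le_self a 64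
  have hhigh : ((a + 1 : ℕ) : ℝ) ≤ (64 * (a / 64 + 1) : ℕ) := by
    exact_mod_cast Nat.lt_mul_div_succ a (show 0 < 64 by norm_num)
  push_cast at hhigh
  constructor <;> rw [hscale] <;> nlinarith

variable (O : ℕ → Set (ℝ × ℝ))

-- The last two conditions say that the disc of `o` meets `cell (s + 1) a`.
def HitsBy (n s a : ℕ) : Prop :=
  ∃ o ∈ O n, (64⁻¹ : ℝ) ^ (s + 2) < o.2 ∧ o.2 ≤ (64⁻¹ : ℝ) ^ (s + 1) ∧
    a * (64⁻¹ : ℝ) ^ (s + 1) - o.2 ≤ o.1 ∧ o.1 ≤ (a + 1) * (64⁻¹ : ℝ) ^ (s + 1) + o.2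

-- `a ∈ survivors O s` stands for `cell s a`; the children of `cell s m` are the cells
-- `64 * m + r`, `r < 64`, of level `s + 1`.
open Classical in
noncomputable def survivors : ℕ → Finset ℕ
  | 0 => {0}
  | s + 1 => (children (survivors s)).filter fun a => ¬ ∃ n, HitsBy O n s a

variable {O}

lemma mem_survivors_succ {s a : ℕ} :
    a ∈ survivors O (s + 1) ↔ a / 64 ∈ survivors O s ∧ ¬ ∃ n, HitsBy O n s a := by
  rw [← mem_children]
  classical exact mem_filter

lemma div_pow_mem_survivors {s : ℕ} :
    ∀ {k a : ℕ}, a ∈ survivors O (s + k) → a / 64 ^ k ∈ survivors O s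
  | 0, a, h => by simpa using h
  | k + 1, a, h => by
    rw [pow_succ', ← Nat.div_div_eq_div_mul]
    rw [← add_assoc, mem_survivors_succ] at h
    exact div_pow_mem_survivors h.1

lemma lt_of_hitsBy (hle : ∀ n, ∀ o ∈ O n, o.2 ≤ (64⁻¹ : ℝ) ^ (n + 2)) {n s a : ℕ}
    (h : HitsBy O n s a) : n < s := by
  obtain ⟨o, ho, hlo, -⟩ := h
  have := (pow_lt_pow_iff_right_of_lt_one₀ (by norm_num) (by norm_num)).mp
    (hlo.trans_le (hle n o ho))
  omega

section counting

variable (hsep : ∀ n, ∀ o ∈ O n, ∀ o' ∈ O n, o.1 ≠ o'.1 →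
  min o.2 o'.2 ≤ (64⁻¹ : ℝ) ^ (n + 2) * |o.1 - o'.1|)
include hsep

lemma card_hitsBy_fiber_le {n s A : ℕ} {F : Finset ℕ}
    (hF : ∀ a ∈ F, HitsBy O n s a ∧ a / 64 ^ (n + 1) = A) : #F ≤ 16 := by
  choose! o hoO hlo hhi hleft hright using fun a ha => (hF a ha).1
  set L : ℝ := 64⁻¹ ^ (s + 1)
  set Δ : ℝ := 64 ^ (n + 1) * L with hΔ
  have hL : 0 < L := by positivity
  have hLΔ : L ≤ Δ := le_mul_of_one_le_left hL.le (one_le_pow₀ (by norm_num))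
  -- all cells of the fiber lie in their common ancestor `[A Δ, (A + 1) Δ]` of level `s - n`
  have hwindow : ∀ a ∈ F, (o a).1 ∈ Set.Icc (A * Δ - L) (A * Δ - L + 3 * Δ) := by
    intro a ha
    have hA : A * 64 ^ (n + 1) ≤ a := (hF a ha).2 ▸ Nat.div_mul_le_self a _
    have hA' : a + 1 ≤ (A + 1) * 64 ^ (n + 1) := by
      have := Nat.lt_mul_div_succ a (show 0 < 64 ^ (n + 1) by positivity)
      rw [(hF a ha).2] at this; linarith
    have hA_real : (A : ℝ) * Δ ≤ a * L := by
      rw [hΔ, ← mul_assoc]; gcongr; exact_mod_cast hA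
    have hA'_real : ((a : ℝ) + 1) * L ≤ (A + 1) * Δ := by
      rw [hΔ, ← mul_assoc]; gcongr; exact_mod_cast hA'
    constructor <;> linarith [hleft a ha, hright a ha, hhi a ha]
  have hcenters : #(F.image fun a => (o a).1) ≤ 4 := by
    refine card_le_four_of_separated (lo := A * Δ - L) (hL.trans_le hLΔ) ?_ ?_
    · simpa only [forall_mem_image] using hwindow
    simp only [mem_image]
    rintro _ ⟨a, ha, rfl⟩ _ ⟨b, hb, rfl⟩ hne
    have hscale : (64⁻¹ : ℝ) ^ (s + 2) = 64⁻¹ ^ (n + 2) * Δ := by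
      have hcancel : (64⁻¹ : ℝ) ^ (n + 1) * 64 ^ (n + 1) = 1 := by rw [← mul_pow]; norm_num
      simp only [hΔ, L]
      linear_combination (-(64⁻¹ : ℝ) ^ (s + 2)) * hcancel
    have hmin : 64⁻¹ ^ (n + 2) * Δ < min (o a).2 (o b).2 :=
      hscale ▸ lt_min (hlo a ha) (hlo b hb)
    exact (lt_of_mul_lt_mul_left (hmin.trans_le (hsep n _ (hoO a ha) _ (hoO b hb) hne))
      (by positivity)).le
  have hfiber : ∀ u ∈ F.image fun a => (o a).1, #{a ∈ F | (o a).1 = u} ≤ 4 := by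
    intro u _
    refine card_le_four_of_mul_mem_Icc (lo := u - 2 * L) hL fun a ha => ?_
    obtain ⟨haF, rfl⟩ := mem_filter.mp ha
    constructor <;> linarith [hleft a haF, hright a haF, hhi a haF]
  calc #F ≤ 4 * #(F.image fun a => (o a).1) := card_le_mul_card_image F 4 hfiber
    _ ≤ 16 := by omega

variable (hle : ∀ n, ∀ o ∈ O n, o.2 ≤ (64⁻¹ : ℝ) ^ (n + 2))
include hle

open Classical in
lemma card_filter_hitsBy_le (n s : ℕ) :
    #{a ∈ children (survivors O s) | HitsBy O n s a} ≤ 16 * #(survivors O (s - n)) := by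
  refine card_le_mul_card_image_of_maps_to (f := fun a => a / 64 ^ (n + 1)) ?_ 16
    fun A _ => card_hitsBy_fiber_le (n := n) (s := s) hsep fun a ha => by
      simp only [mem_filter] at ha; exact ⟨ha.1.2, ha.2⟩
  intro a ha
  obtain ⟨hchild, hhit⟩ := mem_filter.mp ha
  have hparent : a / 64 ∈ survivors O (s - n + n) := by
    rw [Nat.sub_add_cancel (lt_of_hitsBy hle hhit).le]; exact mem_children.mp hchild
  simpa only [Nat.div_div_eq_div_mul, ← pow_succ'] using div_pow_mem_survivors hparent

lemma sixty_four_mul_card_survivors_le (s : ℕ) :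
    64 * #(survivors O s) ≤
      #(survivors O (s + 1)) + 16 * ∑ t ∈ range (s + 1), #(survivors O t) := by
  classical
  have hsplit := card_filter_add_card_filter_not (s := children (survivors O s))
    (fun a => ∃ n, HitsBy O n s a)
  have hsurv :
      #(survivors O (s + 1)) = #{a ∈ children (survivors O s) | ¬ ∃ n, HitsBy O n s a} := rfl
  have hhit : {a ∈ children (survivors O s) | ∃ n, HitsBy O n s a} ⊆
      (range (s + 1)).biUnion fun n => {a ∈ children (survivors O s) | HitsBy O n s a} := by
    intro a ha
    obtain ⟨hchild, n, hn⟩ := mem_filter.mp ha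
    exact mem_biUnion.mpr ⟨n, mem_range.mpr (by have := lt_of_hitsBy hle hn; omega),
      mem_filter.mpr ⟨hchild, hn⟩⟩
  have hcount := calc
    #{a ∈ children (survivors O s) | ∃ n, HitsBy O n s a}
      ≤ ∑ n ∈ range (s + 1), #{a ∈ children (survivors O s) | HitsBy O n s a} :=
        (card_le_card hhit).trans card_biUnion_le
    _ ≤ ∑ n ∈ range (s + 1), 16 * #(survivors O (s - n)) :=
        sum_le_sum fun n _ => card_filter_hitsBy_le hsep hle n s
    _ = 16 * ∑ t ∈ range (s + 1), #(survivors O t) := by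
        rw [← mul_sum, ← sum_range_reflect (fun t => #(survivors O t))]
        simp only [add_tsub_cancel_right]
  rw [card_children] at hsplit
  omega

lemma sum_card_survivors_le (s : ℕ) :
    ∑ t ∈ range (s + 1), #(survivors O t) ≤ 2 * #(survivors O s) := by
  induction s with
  | zero => simp [survivors]
  | succ s ih =>
    have := sixty_four_mul_card_survivors_le hsep hle s
    rw [sum_range_succ]
    omega

lemma survivors_nonempty (s : ℕ) : (survivors O s).Nonempty := by
  rw [← card_pos]
  have h0 : #(survivors O 0) ≤ ∑ t ∈ range (s + 1), #(survivors O t) :=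
    single_le_sum (f := fun t => #(survivors O t)) (fun _ _ => Nat.zero_le _)
      (mem_range.mpr s.succ_pos)
  have := sum_card_survivors_le hsep hle s
  simp only [survivors, card_singleton] at h0
  omega

end counting

variable (O) in
def cantorSet (s : ℕ) : Set ℝ := ⋃ a ∈ survivors O s, cell s a

lemma cantorSet_succ_subset (s : ℕ) : cantorSet O (s + 1) ⊆ cantorSet O s := by
  simp only [cantorSet, Set.iUnion₂_subset_iff]
  intro a ha
  exact (cell_succ_subset s a).trans
    (Set.subset_biUnion_of_mem (u := cell s) (mem_survivors_succ.mp ha).1)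

lemma isCompact_cantorSet (s : ℕ) : IsCompact (cantorSet O s) :=
  (survivors O s).finite_toSet.isCompact_biUnion fun _ _ => isCompact_Icc

theorem exists_forall_lt_abs_sub (hpos : ∀ n, ∀ o ∈ O n, 0 < o.2)
    (hle : ∀ n, ∀ o ∈ O n, o.2 ≤ (64⁻¹ : ℝ) ^ (n + 2))
    (hsep : ∀ n, ∀ o ∈ O n, ∀ o' ∈ O n, o.1 ≠ o'.1 →
      min o.2 o'.2 ≤ (64⁻¹ : ℝ) ^ (n + 2) * |o.1 - o'.1|) :
    ∃ x : ℝ, ∀ n, ∀ o ∈ O n, o.2 < |x - o.1| := by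
  have hnonempty (s : ℕ) : (cantorSet O s).Nonempty := by
    obtain ⟨a, ha⟩ := survivors_nonempty hsep hle s
    exact ⟨a * 64⁻¹ ^ s, Set.mem_biUnion ha (Set.left_mem_Icc.mpr (by gcongr; linarith))⟩
  obtain ⟨x, hx⟩ := IsCompact.nonempty_iInter_of_sequence_nonempty_isCompact_isClosed
    (cantorSet O) cantorSet_succ_subset hnonempty (isCompact_cantorSet 0)
    fun s => (isCompact_cantorSet s).isClosed
  refine ⟨x, fun n o ho => ?_⟩
  obtain ⟨m, hm_lo, hm_hi⟩ := exists_nat_pow_near_of_lt_one (hpos n o ho)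
    ((hle n o ho).trans (pow_le_one₀ (by norm_num) (by norm_num))) (by norm_num)
    (by norm_num : (64⁻¹ : ℝ) < 1)
  have hm := (pow_lt_pow_iff_right_of_lt_one₀ (by norm_num) (by norm_num)).mp
    (hm_lo.trans_le (hle n o ho))
  obtain ⟨s, rfl⟩ : ∃ s, m = s + 1 := ⟨m - 1, by omega⟩
  obtain ⟨a, ha, hxa⟩ := Set.mem_iUnion₂.mp (Set.mem_iInter.mp hx (s + 1))
  by_contra! hclose
  obtain ⟨h1, h2⟩ := abs_le.mp hclose
  exact (mem_survivors_succ.mp ha).2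
    ⟨n, o, ho, hm_lo, hm_hi, by linarith [hxa.1], by linarith [hxa.2]⟩

end Avoidance

section pseudoAbs

variable {d : ℕ → ℕ}

lemma Dprod_dvd_Dprod {N M : ℕ} (h : N ≤ M) : Dprod d N ∣ Dprod d M :=
  prod_dvd_prod_of_subset _ _ _ (range_subset_range.mpr h)

lemma exists_dvd_pseudoAbs_eq {q : ℕ} (hq : 0 < q) :
    ∃ N, Dprod d N ∣ q ∧ pseudoAbs d q = 1 / Dprod d N := by
  set S := {x : ℝ | ∃ N, Dprod d N ∣ q ∧ x = 1 / (Dprod d N : ℝ)}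
  have hfin : S.Finite := ((q.divisors.finite_toSet).image fun m : ℕ => 1 / (m : ℝ)).subset <| by
    rintro _ ⟨N, hN, rfl⟩
    exact ⟨_, Nat.mem_divisors.mpr ⟨hN, hq.ne'⟩, rfl⟩
  exact (show S.Nonempty from ⟨1, 0, by simp [Dprod]⟩).csInf_mem hfin

lemma one_div_le_pseudoAbs {q : ℕ} (hq : 0 < q) : 1 / (q : ℝ) ≤ pseudoAbs d q := by
  obtain ⟨N, hN, heq⟩ := exists_dvd_pseudoAbs_eq (d := d) hq
  rw [heq]
  have hNq := Nat.le_of_dvd hq hN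
  have hN0 : 0 < Dprod d N := Nat.pos_of_dvd_of_pos hN hq
  gcongr

lemma exists_dvd_dvd_one_div_le_max {q q' : ℕ} (hq : 0 < q) (hq' : 0 < q') :
    ∃ D : ℕ, D ∣ q ∧ D ∣ q' ∧ 1 / (D : ℝ) ≤ max (pseudoAbs d q) (pseudoAbs d q') := by
  obtain ⟨N, hN, heq⟩ := exists_dvd_pseudoAbs_eq (d := d) hq
  obtain ⟨N', hN', heq'⟩ := exists_dvd_pseudoAbs_eq (d := d) hq'
  rcases le_total N N' with h | h
  · exact ⟨_, hN, (Dprod_dvd_Dprod h).trans hN', heq ▸ le_max_left _ _⟩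
  · exact ⟨_, (Dprod_dvd_Dprod h).trans hN, hN', heq' ▸ le_max_right _ _⟩

end pseudoAbs

lemma div_mul_le_abs_div_sub_div {D q q' : ℕ} {p p' : ℤ} (hD : D ∣ q) (hD' : D ∣ q')
    (hq : 0 < q) (hq' : 0 < q') (hne : (p : ℝ) / q ≠ p' / q') :
    (D : ℝ) / (q * q') ≤ |(p : ℝ) / q - p' / q'| := by
  have hz : p * q' - q * p' ≠ 0 := by
    contrapose! hne
    rw [div_eq_div_iff (by positivity) (by positivity)]
    exact_mod_cast (by linarith : p * q' = p' * q)
  have hdvd : (D : ℤ) ∣ p * q' - q * p' :=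
    dvd_sub (dvd_mul_of_dvd_right (by exact_mod_cast hD') _)
      (dvd_mul_of_dvd_left (by exact_mod_cast hD) _)
  have hle : (D : ℝ) ≤ |((p * q' - q * p' : ℤ) : ℝ)| := by
    exact_mod_cast Int.le_of_dvd (abs_pos.mpr hz) ((dvd_abs _ _).mpr hdvd)
  rw [div_sub_div _ _ (by positivity) (by positivity), abs_div,
    abs_of_pos (by positivity : (0 : ℝ) < q * q')]
  push_cast at hle
  gcongr

lemma rpow_mul_rpow_of_add_eq_one {x i j : ℝ} (hx : 0 < x) (hij : i + j = 1) :
    x ^ i * x ^ j = x := by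
  rw [← Real.rpow_add hx, hij, Real.rpow_one]

section approxObstacles

variable {d : ℕ → ℕ} {c i j : ℝ}

lemma pseudoAbs_nonneg (q : ℕ) : 0 ≤ pseudoAbs d q :=
  Real.sInf_nonneg <| by rintro _ ⟨N, -, rfl⟩; positivity

lemma pseudoAbs_le_rpow {q : ℕ} (hi : 0 < i) (hcq : 0 ≤ c / q)
    (hsmall : pseudoAbs d q ^ (1 / i) ≤ c / q) : pseudoAbs d q ≤ (c / q) ^ i := by
  rwa [one_div, Real.rpow_inv_le_iff_of_pos (pseudoAbs_nonneg q) hcq hi] at hsmall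

def approxObstacles (d : ℕ → ℕ) (c i j : ℝ) : Set (ℝ × ℝ) :=
  {o | ∃ q : ℕ, 0 < q ∧ pseudoAbs d q ^ (1 / i) ≤ c / q ∧
    ∃ p : ℤ, o = ((p : ℝ) / q, (c / q) ^ j / q)}

lemma radius_pos_of_mem_approxObstacles (hc : 0 < c) {o : ℝ × ℝ}
    (ho : o ∈ approxObstacles d c i j) : 0 < o.2 := by
  obtain ⟨q, hq, -, p, rfl⟩ := ho
  have hq' : (0 : ℝ) < q := by exact_mod_cast hq
  dsimp only
  positivity

lemma radius_le_of_mem_approxObstacles (hc : 0 < c) (hi : 0 < i) (hij : i + j = 1)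
    {o : ℝ × ℝ} (ho : o ∈ approxObstacles d c i j) : o.2 ≤ c := by
  obtain ⟨q, hq, hsmall, p, rfl⟩ := ho
  have hq' : (1 : ℝ) ≤ q := by exact_mod_cast hq
  have hcq : 0 < c / q := by positivity
  have hqi : 1 / (q : ℝ) ≤ (c / q) ^ i :=
    (one_div_le_pseudoAbs hq).trans (pseudoAbs_le_rpow hi hcq.le hsmall)
  have hqj : (c / q) ^ j / q ≤ c / q := calc
    (c / q) ^ j / q = (c / q) ^ j * (1 / q) := by ring
    _ ≤ (c / q) ^ j * (c / q) ^ i := by gcongr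
    _ = c / q := by rw [mul_comm, rpow_mul_rpow_of_add_eq_one hcq hij]
  exact hqj.trans (div_le_self hc.le hq')

lemma radius_le_mul_abs_sub (hc : 0 < c) (hi : 0 < i) (hj : 0 ≤ j) (hij : i + j = 1)
    {q q' : ℕ} {p p' : ℤ} (hq : 0 < q) (hqq' : q ≤ q')
    (hsmall : pseudoAbs d q ^ (1 / i) ≤ c / q) (hsmall' : pseudoAbs d q' ^ (1 / i) ≤ c / q')
    (hne : (p : ℝ) / q ≠ p' / q') :
    (c / q') ^ j / q' ≤ c * |(p : ℝ) / q - p' / q'| := by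
  have hq' : 0 < q' := hq.trans_le hqq'
  obtain ⟨D, hD, hD', hmax⟩ := exists_dvd_dvd_one_div_le_max (d := d) hq hq'
  have hD0 : (0 : ℝ) < D := by exact_mod_cast Nat.pos_of_dvd_of_pos hD hq
  have hcq : 0 < c / q := by positivity
  have hcq' : 0 < c / q' := by positivity
  have hcq_le : c / q' ≤ c / q := by gcongr
  -- that is, `D ≥ (q / c) ^ i`
  have hDi : 1 ≤ (c / q) ^ i * D := by
    have hmax_le : max (pseudoAbs d q) (pseudoAbs d q') ≤ (c / q) ^ i :=
      max_le (pseudoAbs_le_rpow hi hcq.le hsmall)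
        ((pseudoAbs_le_rpow hi hcq'.le hsmall').trans (Real.rpow_le_rpow hcq'.le hcq_le hi.le))
    rw [← div_le_iff₀ hD0]
    exact hmax.trans hmax_le
  have hDj : (c / q) ^ j ≤ c / q * D := calc
    (c / q) ^ j ≤ (c / q) ^ j * ((c / q) ^ i * D) := le_mul_of_one_le_right (by positivity) hDi
    _ = c / q * D := by
      rw [← mul_assoc, mul_comm _ ((c / q) ^ i), rpow_mul_rpow_of_add_eq_one hcq hij]
  calc (c / q') ^ j / q' ≤ (c / q) ^ j / q' := by gcongr
    _ ≤ c / q * D / q' := by gcongr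
    _ = c * (D / (q * q')) := by ring
    _ ≤ c * |(p : ℝ) / q - p' / q'| := by
      gcongr; exact div_mul_le_abs_div_sub_div hD hD' hq hq' hne

lemma approxObstacles_separated (hc : 0 < c) (hi : 0 < i) (hj : 0 ≤ j) (hij : i + j = 1)
    {o o' : ℝ × ℝ} (ho : o ∈ approxObstacles d c i j) (ho' : o' ∈ approxObstacles d c i j)
    (hne : o.1 ≠ o'.1) : min o.2 o'.2 ≤ c * |o.1 - o'.1| := by
  obtain ⟨q, hq, hsmall, p, rfl⟩ := ho
  obtain ⟨q', hq', hsmall', p', rfl⟩ := ho'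
  rcases le_total q q' with h | h
  · exact (min_le_right _ _).trans (radius_le_mul_abs_sub hc hi hj hij hq h hsmall hsmall' hne)
  · rw [abs_sub_comm]
    exact (min_le_left _ _).trans
      (radius_le_mul_abs_sub hc hi hj hij hq' h hsmall' hsmall hne.symm)

lemma mem_badD_of_forall_lt_abs_sub (hc : 0 < c) (hj : 0 < j) {x : ℝ}
    (hx : ∀ o ∈ approxObstacles d c i j, o.2 < |x - o.1|) : x ∈ BadD d i j := by
  refine ⟨c, hc, fun q hq => ?_⟩
  have hq' : (0 : ℝ) < q := by exact_mod_cast hq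
  by_cases hsmall : pseudoAbs d q ^ (1 / i) ≤ c / q
  · have hdist : distNearestInt (q * x) = q * |x - round (q * x) / q| := by
      rw [distNearestInt, ← abs_of_pos hq', ← abs_mul, abs_of_pos hq', mul_sub,
        mul_div_cancel₀ _ hq'.ne']
    have hlt : (c / q) ^ j < distNearestInt (q * x) := by
      rw [hdist, ← div_lt_iff₀' hq']
      exact hx _ ⟨q, hq, hsmall, round (q * x), rfl⟩
    refine lt_max_of_lt_right ?_
    rw [one_div]
    exact (Real.lt_rpow_inv_iff_of_pos (by positivity) (abs_nonneg _) hj).mpr hlt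
  · exact lt_max_of_lt_left (not_le.mp hsmall)

end approxObstacles

theorem iInter_badD_nonempty_general (d : ℕ → ℕ → ℕ)
    (i j : ℕ → ℝ)
    (hi : ∀ n, 0 < i n) (hj : ∀ n, 0 < j n)
    (hij : ∀ n, i n + j n = 1) :
    (⋂ n : ℕ, BadD (d n) (i n) (j n)).Nonempty := by
  have hc (n : ℕ) : (0 : ℝ) < 64⁻¹ ^ (n + 2) := by positivity
  obtain ⟨x, hx⟩ := Avoidance.exists_forall_lt_abs_sub
    (O := fun n => approxObstacles (d n) (64⁻¹ ^ (n + 2)) (i n) (j n))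
    (fun n _ => radius_pos_of_mem_approxObstacles (hc n))
    (fun n _ => radius_le_of_mem_approxObstacles (hc n) (hi n) (hij n))
    (fun n _ ho _ ho' => approxObstacles_separated (hc n) (hi n) (hj n).le (hij n) ho ho')
  exact ⟨x, Set.mem_iInter.mpr fun n => mem_badD_of_forall_lt_abs_sub (hc n) (hj n) (hx n)⟩

/-- The countable intersection of the sets `Bad_{𝒟⁽ⁿ⁾}(iₙ, jₙ)` is nonempty. -/
theorem iInter_badD_nonempty (d : ℕ → ℕ → ℕ)
    (hd2 : ∀ n k, 2 ≤ d n k) (hdbdd : ∀ n, ∃ M, ∀ k, d n k ≤ M)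
    (i j : ℕ → ℝ)
    (hi : ∀ n, 0 < i n) (hi' : ∀ n, i n < 1) (hj : ∀ n, 0 < j n) (hj' : ∀ n, j n < 1)
    (hij : ∀ n, i n + j n = 1) :
    (⋂ n : ℕ, BadD (d n) (i n) (j n)).Nonempty :=
  iInter_badD_nonempty_general d i j hi hj hij
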